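/- arXiv:1905.00101 — 3 statements merged into one kernel-verified Lean document; each statement's English description precedes it below -/
import Mathlib

section
/- Let n ≥ 1, let ℱ be a nonempty finite family of nonempty subsets of ℝⁿ, each S ∈ ℱ assigned a number ℓ(S) > 0, and define d_ℱ(x) := inf_{S∈ℱ}(ℓ(S) + dist(x,S)) for x ∈ ℝⁿ and d_ℱ(I) := inf_{x∈I} d_ℱ(x) for a dyadic cube I. Let 0 < τ < 1/(2√n) and let 𝒞_ℱ be the collection of maximal dyadic cubes I of ℝⁿ satisfying ℓ(I) < τ d_ℱ(I), where ℓ(I) denotes the sidelength of I. Then every I ∈ 𝒞_ℱ satisfies τ d_ℱ(I)/(2(1+√n)) ≤ ℓ(I) < τ d_ℱ(I). -/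
open MeasureTheory Metric Set
open scoped ENNReal NNReal

noncomputable section

namespace QCMGP

abbrev Euc (n : ℕ) := EuclideanSpace ℝ (Fin n)

/-- The `d`-dimensional Hausdorff content `ℋ^d_∞`. -/
def hcontent (n : ℕ) (d : ℝ) (A : Set (Euc n)) : ℝ≥0∞ :=
  ⨅ (U : ℕ → Set (Euc n)) (_ : A ⊆ ⋃ i, U i), ∑' i, EMetric.diam (U i) ^ d

/-- `E` is `(c,d)`-lower content regular: `ℋ^d_∞(E ∩ B(x,r)) ≥ c rᵈ` for all `x ∈ E`
and `0 < r < diam E`. -/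
def LowerContentRegular (n : ℕ) (c d : ℝ) (E : Set (Euc n)) : Prop :=
  ∀ x ∈ E, ∀ r : ℝ, 0 < r → ENNReal.ofReal r < EMetric.diam E →
    ENNReal.ofReal c * ENNReal.ofReal r ^ d ≤ hcontent n d (E ∩ ball x r)

/-- Normalized local Hausdorff distance `d_B(A,B)` for the ball `B = B(x,r)`
(the factor `2 / diam B` equals `r⁻¹`). -/
def ndist (n : ℕ) (x : Euc n) (r : ℝ) (A B : Set (Euc n)) : ℝ :=
  r⁻¹ * max (⨆ y : ↥(A ∩ ball x r), Metric.infDist y.1 B)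
            (⨆ y : ↥(B ∩ ball x r), Metric.infDist y.1 A)

/-- `L` is a `d`-plane: a nonempty `d`-dimensional affine subspace. -/
def IsPlane (n d : ℕ) (L : AffineSubspace ℝ (Euc n)) : Prop :=
  (L : Set (Euc n)).Nonempty ∧ Module.finrank ℝ L.direction = d

/-- `U` is a union of `d`-planes. -/
def IsUnionOfPlanes (n d : ℕ) (U : Set (Euc n)) : Prop :=
  ∃ Ps : Set (AffineSubspace ℝ (Euc n)),
    (∀ L ∈ Ps, IsPlane n d L) ∧ U = ⋃ L ∈ Ps, (L : Set (Euc n))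

/-- `β_E^{d,p}(B(x,r), L)`. -/
def betaPlane (n d : ℕ) (p : ℝ) (E : Set (Euc n)) (x : Euc n) (r : ℝ)
    (L : AffineSubspace ℝ (Euc n)) : ℝ≥0∞ :=
  ((ENNReal.ofReal r ^ (d : ℝ))⁻¹ *
    ∫⁻ t in Set.Ioo (0 : ℝ) 1,
      hcontent n d {y | y ∈ ball x r ∩ E ∧ t * r < Metric.infDist y (L : Set (Euc n))} *
        ENNReal.ofReal (t ^ (p - 1))) ^ (1 / p)

/-- `β_E^{d,p}(B(x,r))`. -/
def beta (n d : ℕ) (p : ℝ) (E : Set (Euc n)) (x : Euc n) (r : ℝ) : ℝ≥0∞ :=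
  ⨅ (L : AffineSubspace ℝ (Euc n)) (_ : IsPlane n d L), betaPlane n d p E x r L

/-- A system of Christ–David cubes for `E`, with parameter `ρ ∈ (0,1/1000)` and
`c₀ = 1/500`.  A cube is recorded together with its scale `k`; its sidelength is
`ℓ(Q) = 5 ρ^k`. -/
structure CDS (n : ℕ) (E : Set (Euc n)) where
  ρ : ℝ
  ρ_pos : 0 < ρ
  ρ_small : ρ < 1 / 1000
  cubes : Set (ℤ × Set (Euc n))
  center : ℤ × Set (Euc n) → Euc n
  borel : ∀ Q ∈ cubes, MeasurableSet Q.2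
  subset_amb : ∀ Q ∈ cubes, Q.2 ⊆ E
  cover : ∀ k : ℤ, ∀ x ∈ E, ∃! Q, Q ∈ cubes ∧ Q.1 = k ∧ x ∈ Q.2
  nested : ∀ Q ∈ cubes, ∀ Q' ∈ cubes, (Q.2 ∩ Q'.2).Nonempty → Q.2 ⊆ Q'.2 ∨ Q'.2 ⊆ Q.2
  center_mem : ∀ Q ∈ cubes, center Q ∈ Q.2
  ball_subset : ∀ Q ∈ cubes, ball (center Q) ((1 / 500) * (5 * ρ ^ Q.1)) ∩ E ⊆ Q.2
  subset_ball : ∀ Q ∈ cubes, Q.2 ⊆ ball (center Q) (5 * ρ ^ Q.1)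

/-- The sidelength `ℓ(Q) = 5 ρ^k` of a cube. -/
def CDS.len {n : ℕ} {E : Set (Euc n)} (𝒟 : CDS n E) (Q : ℤ × Set (Euc n)) : ℝ :=
  5 * 𝒟.ρ ^ Q.1

/-- `β_{E,A,p}(R) = ℓ(R)^d + Σ_{Q ⊆ R} β_E^{d,p}(A B_Q)² ℓ(Q)^d`. -/
def CDS.betaSum {n : ℕ} {E : Set (Euc n)} (𝒟 : CDS n E) (d : ℕ) (A p : ℝ)
    (R : ℤ × Set (Euc n)) : ℝ≥0∞ :=
  ENNReal.ofReal (𝒟.len R) ^ (d : ℝ) +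
    ∑' Q : {Q : ℤ × Set (Euc n) // Q ∈ 𝒟.cubes ∧ Q.2 ⊆ R.2},
      beta n d p E (𝒟.center Q.1) (A * 𝒟.len Q.1) ^ 2 *
        ENNReal.ofReal (𝒟.len Q.1) ^ (d : ℝ)

/-- `Σ_{Q ⊆ R, Q bad} ℓ(Q)^d`, the sum of `ℓ(Q)^d` over the subcubes of `R`
satisfying the "bad cube" condition `P`. -/
def CDS.badSum {n : ℕ} {E : Set (Euc n)} (𝒟 : CDS n E) (d : ℕ)
    (R : ℤ × Set (Euc n)) (P : ℤ × Set (Euc n) → Prop) : ℝ≥0∞ :=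
  ∑' Q : {Q : ℤ × Set (Euc n) // Q ∈ 𝒟.cubes ∧ Q.2 ⊆ R.2 ∧ P Q},
    ENNReal.ofReal (𝒟.len Q.1) ^ (d : ℝ)

/-- The sphere of radius `s` centered at `z` inside the affine subspace `W`. -/
def sphereIn (n : ℕ) (W : AffineSubspace ℝ (Euc n)) (z : Euc n) (s : ℝ) : Set (Euc n) :=
  Metric.sphere z s ∩ (W : Set (Euc n))

/-- The pair `(x,r)` is `ε`-GWEC-bad for `F`: there is an `(n-d-1)`-dimensional sphere
`S ⊆ B(x,r)` with `dist(S,F) > εr`, contractible to a point inside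
`{y ∈ B(x,r) : dist(y,F) > εr}`, whose convex hull meets `F`. -/
def GWECBad (n d : ℕ) (ε : ℝ) (F : Set (Euc n)) (x : Euc n) (r : ℝ) : Prop :=
  ∃ (W : AffineSubspace ℝ (Euc n)) (z : Euc n) (s : ℝ),
    z ∈ W ∧ 0 < s ∧ Module.finrank ℝ W.direction = n - d ∧
    sphereIn n W z s ⊆ ball x r ∧
    (ENNReal.ofReal (ε * r) < ⨅ y ∈ sphereIn n W z s, EMetric.infEdist y F) ∧
    (∃ H : Euc n × ℝ → Euc n,
      ContinuousOn H (sphereIn n W z s ×ˢ Set.Icc (0 : ℝ) 1) ∧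
      (∀ q ∈ sphereIn n W z s ×ˢ Set.Icc (0 : ℝ) 1,
        H q ∈ ball x r ∧ ε * r < Metric.infDist (H q) F) ∧
      (∀ y ∈ sphereIn n W z s, H (y, 0) = y) ∧
      (∃ y₀ : Euc n, ∀ y ∈ sphereIn n W z s, H (y, 1) = y₀)) ∧
    (convexHull ℝ (sphereIn n W z s) ∩ F).Nonempty

/-- `F` is Ahlfors `d`-regular with constant `A ≥ 1`. -/
def AhlforsRegular (n : ℕ) (d A : ℝ) (F : Set (Euc n)) : Prop :=
  1 ≤ A ∧ ∀ x ∈ F, ∀ r : ℝ, 0 < r → ENNReal.ofReal r < EMetric.diam F →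
    ENNReal.ofReal (r ^ d / A) ≤ μH[d] (F ∩ ball x r) ∧
      μH[d] (F ∩ ball x r) ≤ ENNReal.ofReal (A * r ^ d)

/-- `F` is uniformly rectifiable: Ahlfors `d`-regular with big pieces of Lipschitz images. -/
def UnifRect (n d : ℕ) (F : Set (Euc n)) : Prop :=
  (∃ A : ℝ, AhlforsRegular n d A F) ∧
    ∃ (L : ℝ≥0) (θ : ℝ), 0 < L ∧ 0 < θ ∧
      ∀ x ∈ F, ∀ r : ℝ, 0 < r → ENNReal.ofReal r < EMetric.diam F →
        ∃ f : EuclideanSpace ℝ (Fin d) → Euc n, LipschitzWith L f ∧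
          ENNReal.ofReal (θ * r ^ (d : ℝ)) ≤ μH[(d : ℝ)] (f '' Set.univ ∩ ball x r)

/-- The measure `1_ℬ(x,r) (dr/r) dℋ^d|_F(x)` is a Carleson measure on `F × (0,∞)`. -/
def CarlesonBad (n : ℕ) (d : ℝ) (F : Set (Euc n)) (ℬ : Set (Euc n × ℝ)) : Prop :=
  ∃ M : ℝ, 0 ≤ M ∧ ∀ x ∈ F, ∀ r : ℝ, 0 < r → ENNReal.ofReal r ≤ EMetric.diam F →
    (∫⁻ y in ball x r ∩ F,
        ∫⁻ s in Set.Ioo (0 : ℝ) r,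
          Set.indicator ℬ (fun q => (ENNReal.ofReal q.2)⁻¹) (y, s) ∂μH[d])
      ≤ ENNReal.ofReal (M * r ^ d)

/-- `Q ⊆ R` for scaled cubes: `Q` is contained in `R` and has smaller or equal scale. -/
def cubeLE {n : ℕ} (Q R : ℤ × Set (Euc n)) : Prop := R.1 ≤ Q.1 ∧ Q.2 ⊆ R.2

/-- `Q'` is a child of `Q`. -/
def CDS.child {n : ℕ} {E : Set (Euc n)} (𝒟 : CDS n E) (Q Q' : ℤ × Set (Euc n)) : Prop :=
  Q' ∈ 𝒟.cubes ∧ Q'.1 = Q.1 + 1 ∧ Q'.2 ⊆ Q.2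

/-- `𝒯` is a stopping-time region with maximal cube `top`. -/
def CDS.IsStoppingTime {n : ℕ} {E : Set (Euc n)} (𝒟 : CDS n E)
    (𝒯 : Set (ℤ × Set (Euc n))) (top : ℤ × Set (Euc n)) : Prop :=
  𝒯 ⊆ 𝒟.cubes ∧ top ∈ 𝒯 ∧ (∀ Q ∈ 𝒯, cubeLE Q top) ∧
    (∀ Q ∈ 𝒯, ∀ R ∈ 𝒟.cubes, cubeLE Q R → cubeLE R top → R ∈ 𝒯) ∧
    (∀ Q ∈ 𝒯, (∃ Q', 𝒟.child Q Q' ∧ Q' ∉ 𝒯) → ∀ Q', 𝒟.child Q Q' → Q' ∉ 𝒯)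

/-- The minimal cubes of a collection `𝒯` of cubes. -/
def minCubes {n : ℕ} (𝒯 : Set (ℤ × Set (Euc n))) : Set (ℤ × Set (Euc n)) :=
  {Q ∈ 𝒯 | ∀ Q' ∈ 𝒯, cubeLE Q' Q → Q' = Q}

/-- `d_ℱ(x) = inf_{S ∈ ℱ} (ℓ(S) + dist(x,S))` for a family `ℱ` of Christ–David cubes. -/
def CDS.dFam {n : ℕ} {E : Set (Euc n)} (𝒟 : CDS n E)
    (ℱ : Set (ℤ × Set (Euc n))) (x : Euc n) : ℝ :=
  ⨅ S : ℱ, (𝒟.len S.1 + Metric.infDist x S.1.2)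

/-- The (half-open) dyadic cube of ℝⁿ of sidelength `2^{-m}` indexed by `k`. -/
def dyC (n : ℕ) (m : ℤ) (k : Fin n → ℤ) : Set (Euc n) :=
  {x | ∀ i, (k i : ℝ) * (2 : ℝ) ^ (-m) ≤ x i ∧ x i < ((k i : ℝ) + 1) * (2 : ℝ) ^ (-m)}

/-- The `d`-dimensional skeleton of the (closed) dyadic cube indexed by `(m,k)`:
the union of its `d`-dimensional faces. -/
def skel (n d : ℕ) (m : ℤ) (k : Fin n → ℤ) : Set (Euc n) :=
  ⋃ (F : Finset (Fin n)) (_ : F.card = d) (ε : Fin n → Fin 2),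
    {x | (∀ i ∈ F, (k i : ℝ) * (2 : ℝ) ^ (-m) ≤ x i ∧
            x i ≤ ((k i : ℝ) + 1) * (2 : ℝ) ^ (-m)) ∧
      ∀ i ∉ F, x i = ((k i : ℝ) + ((ε i : ℕ) : ℝ)) * (2 : ℝ) ^ (-m)}

/-- The concentric dilate `η⁻¹ I` of the dyadic cube indexed by `(m,k)`. -/
def dilC (n : ℕ) (η : ℝ) (m : ℤ) (k : Fin n → ℤ) : Set (Euc n) :=
  {x | ∀ i, |x i - ((k i : ℝ) + 1 / 2) * (2 : ℝ) ^ (-m)| ≤ η⁻¹ * (2 : ℝ) ^ (-m) / 2}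

/-- The dyadic cube `I` is maximal with property `P`: it has `P`, and no dyadic
cube properly containing it has `P`. -/
def MaxWith (n : ℕ) (P : ℤ × (Fin n → ℤ) → Prop) (I : ℤ × (Fin n → ℤ)) : Prop :=
  P I ∧ ∀ J : ℤ × (Fin n → ℤ), dyC n I.1 I.2 ⊆ dyC n J.1 J.2 →
    dyC n J.1 J.2 ≠ dyC n I.1 I.2 → ¬ P J

/-- `d_ℱ(x) = inf_{S ∈ ℱ} (ℓ(S) + dist(x,S))` for a finite family of sets with
assigned sizes. -/
def dGen (n : ℕ) (ℱ : Finset (Set (Euc n))) (Lf : Set (Euc n) → ℝ) (x : Euc n) : ℝ :=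
  ⨅ S : ℱ, (Lf S.1 + Metric.infDist x S.1)

/-- `d_ℱ(I) = inf_{x ∈ I} d_ℱ(x)` over a dyadic cube `I`. -/
def dGenI (n : ℕ) (ℱ : Finset (Set (Euc n))) (Lf : Set (Euc n) → ℝ)
    (I : ℤ × (Fin n → ℤ)) : ℝ :=
  ⨅ x : dyC n I.1 I.2, dGen n ℱ Lf x.1

/-- The unit cube `[0,1]ⁿ`. -/
def unitCube (n : ℕ) : Set (Euc n) := {x | ∀ i, x i ∈ Set.Icc (0 : ℝ) 1}


/-
Let `J` be the dyadic parent of a maximal cube `I`. Maximality gives `2ℓ(I) = ℓ(J) ≥ τ d_ℱ(J)`.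
Since `d_ℱ` is `1`-Lipschitz and `diam J = 2√n ℓ(I)`, `d_ℱ(I) ≤ d_ℱ(J) + 2√n ℓ(I)`; with `τ ≤ 1`
this yields `τ d_ℱ(I) ≤ 2(1 + √n) ℓ(I)`.
-/

section dFamily

variable {n : ℕ} {ℱ : Finset (Set (Euc n))} {Lf : Set (Euc n) → ℝ}

lemma dGen_nonneg (hLf : ∀ S ∈ ℱ, 0 ≤ Lf S) (x : Euc n) : 0 ≤ dGen n ℱ Lf x :=
  Real.iInf_nonneg fun S => add_nonneg (hLf S.1 S.2) infDist_nonneg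

lemma dGen_le_add_dist (x y : Euc n) : dGen n ℱ Lf x ≤ dGen n ℱ Lf y + dist x y := by
  rcases isEmpty_or_nonempty ℱ with hℱ | hℱ
  · simp [dGen, Real.iInf_of_isEmpty, dist_nonneg]
  rw [← sub_le_iff_le_add]
  refine le_ciInf fun S => ?_
  have hx : dGen n ℱ Lf x ≤ Lf S.1 + infDist x S.1 :=
    ciInf_le (Set.finite_range _).bddBelow S
  linarith [infDist_le_infDist_add_dist (x := x) (y := y) (s := S.1)]

lemma dGenI_le_dGen (hLf : ∀ S ∈ ℱ, 0 ≤ Lf S) {I : ℤ × (Fin n → ℤ)} {x : Euc n}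
    (hx : x ∈ dyC n I.1 I.2) : dGenI n ℱ Lf I ≤ dGen n ℱ Lf x :=
  ciInf_le ⟨0, by rintro _ ⟨z, rfl⟩; exact dGen_nonneg hLf z.1⟩ (⟨x, hx⟩ : dyC n I.1 I.2)

lemma dGenI_le_dGenI_add_of_subset (hLf : ∀ S ∈ ℱ, 0 ≤ Lf S) {I J : ℤ × (Fin n → ℤ)}
    {x : Euc n} (hx : x ∈ dyC n I.1 I.2) (hIJ : dyC n I.1 I.2 ⊆ dyC n J.1 J.2) {D : ℝ}
    (hD : ∀ y ∈ dyC n J.1 J.2, ∀ z ∈ dyC n J.1 J.2, dist y z ≤ D) :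
    dGenI n ℱ Lf I ≤ dGenI n ℱ Lf J + D := by
  have : Nonempty (dyC n J.1 J.2) := ⟨⟨x, hIJ hx⟩⟩
  have hJ : dGen n ℱ Lf x - D ≤ dGenI n ℱ Lf J :=
    le_ciInf fun z => by
      linarith [dGen_le_add_dist (ℱ := ℱ) (Lf := Lf) x z.1, hD x (hIJ hx) z.1 z.2]
  linarith [dGenI_le_dGen hLf hx]

end dFamily

section dyadic

variable {n : ℕ}

def dyParent (I : ℤ × (Fin n → ℤ)) : ℤ × (Fin n → ℤ) := (I.1 - 1, fun i => I.2 i / 2)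

lemma two_zpow_neg_sub_one (m : ℤ) : (2 : ℝ) ^ (-(m - 1)) = 2 * 2 ^ (-m) := by
  rw [show -(m - 1) = 1 + -m by ring, zpow_add₀ two_ne_zero, zpow_one]

lemma corner_mem_dyC (m : ℤ) (k : Fin n → ℤ) :
    WithLp.toLp 2 (fun i => (k i : ℝ) * 2 ^ (-m)) ∈ dyC n m k := fun _ =>
  ⟨le_rfl, by nlinarith [zpow_pos (two_pos (α := ℝ)) (-m)]⟩

lemma eq_of_corner_mem_dyC {m : ℤ} {k k' : Fin n → ℤ}
    (h : WithLp.toLp 2 (fun i => (k' i : ℝ) * 2 ^ (-m)) ∈ dyC n m k) : k' = k := by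
  funext i
  have hL : (0 : ℝ) < 2 ^ (-m) := by positivity
  obtain ⟨h₁, h₂⟩ := h i
  have : k i ≤ k' i := by exact_mod_cast le_of_mul_le_mul_right h₁ hL
  have : k' i < k i + 1 := by
    exact_mod_cast (lt_of_mul_lt_mul_right h₂ hL.le : (k' i : ℝ) < k i + 1)
  omega

lemma dyC_subset_dyParent (I : ℤ × (Fin n → ℤ)) :
    dyC n I.1 I.2 ⊆ dyC n (dyParent I).1 (dyParent I).2 := by
  intro x hx i
  obtain ⟨h₁, h₂⟩ := hx i
  have hL : (0 : ℝ) < 2 ^ (-I.1) := by positivity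
  have c₁ : ((2 * (I.2 i / 2) : ℤ) : ℝ) ≤ I.2 i := by
    have : 2 * (I.2 i / 2) ≤ I.2 i := by omega
    exact_mod_cast this
  have c₂ : (I.2 i : ℝ) + 1 ≤ ((2 * (I.2 i / 2) : ℤ) : ℝ) + 2 := by
    have : I.2 i + 1 ≤ 2 * (I.2 i / 2) + 2 := by omega
    exact_mod_cast this
  push_cast at c₁ c₂
  simp only [dyParent, two_zpow_neg_sub_one]
  constructor <;> nlinarith

lemma dyC_dyParent_ne (hn : 1 ≤ n) (I : ℤ × (Fin n → ℤ)) :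
    dyC n (dyParent I).1 (dyParent I).2 ≠ dyC n I.1 I.2 := by
  intro h
  set i₀ : Fin n := ⟨0, hn⟩
  -- the sibling of `I` across its first coordinate has the same parent
  set k' := Function.update I.2 i₀ (I.2 i₀ + 1 - 2 * (I.2 i₀ % 2))
  have hk' : k' ≠ I.2 := fun hk => by
    have := congrFun hk i₀
    simp only [k', Function.update_self] at this
    omega
  have hparent : dyParent (I.1, k') = dyParent I := by
    simp only [dyParent, Prod.mk.injEq, true_and]
    funext i
    by_cases hi : i = i₀
    · subst hi; simp only [k', Function.update_self]; omega
    · simp [k', Function.update_of_ne hi]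
  have := dyC_subset_dyParent (I.1, k') (corner_mem_dyC I.1 k')
  rw [hparent, h] at this
  exact hk' (eq_of_corner_mem_dyC this)

lemma dist_le_of_mem_dyC {m : ℤ} {k : Fin n → ℤ} {x y : Euc n} (hx : x ∈ dyC n m k)
    (hy : y ∈ dyC n m k) : dist x y ≤ √n * 2 ^ (-m) := by
  have hcoord : ∀ i, dist (x i) (y i) ≤ (2 : ℝ) ^ (-m) := fun i => by
    obtain ⟨h₁, h₂⟩ := hx i
    obtain ⟨h₃, h₄⟩ := hy i
    rw [Real.dist_eq, abs_le]
    constructor <;> linarith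
  calc dist x y = √(∑ i, dist (x i) (y i) ^ 2) := EuclideanSpace.dist_eq x y
    _ ≤ √(∑ _i : Fin n, ((2 : ℝ) ^ (-m)) ^ 2) := by gcongr with i; exact hcoord i
    _ = √(n * ((2 : ℝ) ^ (-m)) ^ 2) := by simp
    _ = √n * 2 ^ (-m) := by rw [Real.sqrt_mul n.cast_nonneg, Real.sqrt_sq (by positivity)]

end dyadic

theorem stmt6_general (n : ℕ) (hn : 1 ≤ n) (ℱ : Finset (Set (Euc n)))
    (Lf : Set (Euc n) → ℝ) (hLf : ∀ S ∈ ℱ, 0 < Lf S)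
    (τ : ℝ) (hτ0 : 0 < τ) (hτ : τ < 1 / (2 * Real.sqrt n)) :
    ∀ I : ℤ × (Fin n → ℤ),
      MaxWith n (fun J => (2 : ℝ) ^ (-J.1) < τ * dGenI n ℱ Lf J) I →
      τ * dGenI n ℱ Lf I / (2 * (1 + Real.sqrt n)) ≤ (2 : ℝ) ^ (-I.1) ∧
        (2 : ℝ) ^ (-I.1) < τ * dGenI n ℱ Lf I := by
  rintro I ⟨hI, hmax⟩
  refine ⟨?_, hI⟩
  have hLf' : ∀ S ∈ ℱ, 0 ≤ Lf S := fun S hS => (hLf S hS).le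
  have hparent : τ * dGenI n ℱ Lf (dyParent I) ≤ 2 * 2 ^ (-I.1) := by
    rw [← two_zpow_neg_sub_one]
    exact not_lt.1 (hmax _ (dyC_subset_dyParent I) (dyC_dyParent_ne hn I))
  have hd : dGenI n ℱ Lf I ≤ dGenI n ℱ Lf (dyParent I) + √n * (2 * 2 ^ (-I.1)) := by
    refine dGenI_le_dGenI_add_of_subset hLf' (corner_mem_dyC I.1 I.2) (dyC_subset_dyParent I)
      fun y hy z hz => ?_
    have := dist_le_of_mem_dyC hy hz
    rwa [dyParent, two_zpow_neg_sub_one] at this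
  have hτ1 : τ ≤ 1 := by
    have hsqrt : 1 ≤ √(n : ℝ) := Real.one_le_sqrt.2 (by exact_mod_cast hn)
    rw [lt_div_iff₀ (by positivity)] at hτ
    nlinarith
  rw [div_le_iff₀ (by positivity)]
  calc τ * dGenI n ℱ Lf I
      ≤ τ * dGenI n ℱ Lf (dyParent I) + τ * (√n * (2 * 2 ^ (-I.1))) := by
        rw [← mul_add]; gcongr
    _ ≤ 2 * 2 ^ (-I.1) + √n * (2 * 2 ^ (-I.1)) :=
        add_le_add hparent (mul_le_of_le_one_left (by positivity) hτ1)
    _ = 2 ^ (-I.1) * (2 * (1 + √n)) := by ring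

theorem stmt6 (n : ℕ) (hn : 1 ≤ n) (ℱ : Finset (Set (Euc n))) (hne : ℱ.Nonempty)
    (hSne : ∀ S ∈ ℱ, S.Nonempty) (Lf : Set (Euc n) → ℝ) (hLf : ∀ S ∈ ℱ, 0 < Lf S)
    (τ : ℝ) (hτ0 : 0 < τ) (hτ : τ < 1 / (2 * Real.sqrt n)) :
    ∀ I : ℤ × (Fin n → ℤ),
      MaxWith n (fun J => (2 : ℝ) ^ (-J.1) < τ * dGenI n ℱ Lf J) I →
      τ * dGenI n ℱ Lf I / (2 * (1 + Real.sqrt n)) ≤ (2 : ℝ) ^ (-I.1) ∧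
        (2 : ℝ) ^ (-I.1) < τ * dGenI n ℱ Lf I :=
  stmt6_general n hn ℱ Lf hLf τ hτ0 hτ

end QCMGP
end
end

section
/- Let 1 ≤ d < n be integers, C₀ ≥ 1, C₁ ≥ 1, C₂ > 2C₀. There is ε* > 0 depending on C₀, C₁, C₂ such that for all 0 < ε₁ ≤ ε₀ ≤ ε* the following holds. Let E₁, E₂ ⊆ ℝⁿ, and let B = B(x_B, r_B) be a ball centered on E₁ such that d_{C₀B}(E₁, U) < ε₀ for some set U ⊆ ℝⁿ that is a union of d-planes, and such that d_{C₂B}(E₁, E₂) < ε₁. Then for every ball B' = B(x_{B'}, r_{B'}) centered on E₂ with C₂B' ⊆ B and r_{B'} ≥ r_B/C₁, one has d_{C₀B'}(E₂, U) < 2C₁C₂ ε₀. In particular, the bilateral approximation by unions of planes (BAUP) property with parameters (ε₀, C₀) is (ε₁, C₁, C₂)-continuous. -/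
open MeasureTheory Metric Set
open scoped ENNReal NNReal

noncomputable section

namespace QCMGP

/-! A point of `E₂` in `C₀B'` lies within `ε₁C₂r` of some point of `E₁`; the choice
`ε* = (C₂ - C₀)/(C₁C₂)` gives `ε₁C₂r ≤ (C₂ - C₀)r'`, so that point still lies in `C₂B' ⊆ B ⊆ C₀B`,
hence within `ε₀C₀r` of `U`. Symmetrically, a point of `U` in `C₀B' ⊆ C₀B` lies within `ε₀C₀r`
of a point of `E₁` in `C₂B`, hence within `ε₁C₂r` of `E₂`. Since `r ≤ C₁r'` and `ε₁ ≤ ε₀`, both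
excesses are below `ε₀C₁(C₂ + C₀)r' < 2C₁C₂ε₀ · C₀r'`. -/

lemma bddAbove_range_infDist_inter_ball (n : ℕ) (x : Euc n) (R : ℝ) (A B : Set (Euc n)) :
    BddAbove (Set.range fun y : ↥(A ∩ ball x R) => infDist y.1 B) := by
  refine ⟨infDist x B + R, ?_⟩
  rintro _ ⟨⟨y, -, hy⟩, rfl⟩
  linarith [infDist_le_infDist_add_dist (x := y) (y := x) (s := B), (mem_ball.mp hy).le]

lemma ndist_comm (n : ℕ) (x : Euc n) (R : ℝ) (A B : Set (Euc n)) :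
    ndist n x R A B = ndist n x R B A := by
  rw [ndist, ndist, max_comm]

lemma infDist_lt_of_ndist_lt {n : ℕ} {x : Euc n} {R ε : ℝ} {A B : Set (Euc n)} (hR : 0 < R)
    (h : ndist n x R A B < ε) {z : Euc n} (hz : z ∈ A ∩ ball x R) : infDist z B < ε * R := by
  rw [ndist, inv_mul_lt_iff₀ hR] at h
  calc infDist z B ≤ ⨆ y : ↥(A ∩ ball x R), infDist y.1 B :=
        le_ciSup (bddAbove_range_infDist_inter_ball n x R A B) ⟨z, hz⟩
    _ ≤ _ := le_max_left _ _
    _ < R * ε := h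
    _ = ε * R := mul_comm R ε

lemma mul_ndist_le_of_forall_infDist_le {n : ℕ} {x : Euc n} {R M : ℝ} {A B : Set (Euc n)}
    (hR : 0 < R) (hM : 0 ≤ M) (hAB : ∀ z ∈ A ∩ ball x R, infDist z B ≤ M)
    (hBA : ∀ z ∈ B ∩ ball x R, infDist z A ≤ M) : R * ndist n x R A B ≤ M := by
  rw [ndist, ← mul_assoc, mul_inv_cancel₀ hR.ne', one_mul]
  exact max_le (Real.iSup_le (fun y => hAB y.1 y.2) hM) (Real.iSup_le (fun y => hBA y.1 y.2) hM)

lemma infDist_lt_add_of_thickening_subset {α : Type*} [PseudoMetricSpace α] {A B C S T : Set α}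
    {δ₁ δ₂ : ℝ} (hB : B.Nonempty) (hST : thickening δ₁ S ⊆ T)
    (hAB : ∀ z ∈ A ∩ S, infDist z B < δ₁) (hBC : ∀ w ∈ B ∩ T, infDist w C < δ₂) :
    ∀ z ∈ A ∩ S, infDist z C < δ₁ + δ₂ := by
  intro z hz
  obtain ⟨w, hwB, hzw⟩ := (infDist_lt_iff hB).mp (hAB z hz)
  have hwT : w ∈ T := hST (mem_thickening_iff.mpr ⟨z, hz.2, by rwa [dist_comm]⟩)
  linarith [infDist_le_infDist_add_dist (x := z) (y := w) (s := C), hBC w ⟨hwB, hwT⟩]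

lemma mul_ndist_le_add_of_ndist_lt {n : ℕ} {x x' : Euc n} {R₁ R₂ ρ η₁ η₂ : ℝ}
    {A B C : Set (Euc n)} (hB : B.Nonempty) (hR₁ : 0 < R₁) (hR₂ : 0 < R₂) (hρ : 0 < ρ)
    (hη₁ : 0 < η₁) (hη₂ : 0 < η₂) (hBC : ndist n x R₁ B C < η₁) (hBA : ndist n x R₂ B A < η₂)
    (hA : thickening (η₂ * R₂) (ball x' ρ) ⊆ ball x R₁)
    (hC : thickening (η₁ * R₁) (ball x' ρ) ⊆ ball x R₂) :
    ρ * ndist n x' ρ A C ≤ η₂ * R₂ + η₁ * R₁ := by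
  have hρR₁ := (self_subset_thickening (by positivity) _).trans hC
  have hρR₂ := (self_subset_thickening (by positivity) _).trans hA
  have hAC := infDist_lt_add_of_thickening_subset hB hA
    (fun z hz => infDist_lt_of_ndist_lt hR₂ (ndist_comm n x _ B A ▸ hBA) ⟨hz.1, hρR₁ hz.2⟩)
    (fun w hw => infDist_lt_of_ndist_lt hR₁ hBC hw)
  have hCA := infDist_lt_add_of_thickening_subset hB hC
    (fun z hz => infDist_lt_of_ndist_lt hR₁ (ndist_comm n x _ B C ▸ hBC) ⟨hz.1, hρR₂ hz.2⟩)
    (fun w hw => infDist_lt_of_ndist_lt hR₂ hBA hw)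
  exact mul_ndist_le_of_forall_infDist_le hρ (by positivity) (fun z hz => (hAC z hz).le)
    (fun z hz => (add_comm (η₁ * R₁) _ ▸ hCA z hz).le)

theorem stmt8_general (n d : ℕ) (C₀ C₁ C₂ : ℝ)
    (hC₀ : 1 ≤ C₀) (hC₁ : 1 ≤ C₁) (hC₂ : 2 * C₀ < C₂) :
    ∃ εs : ℝ, 0 < εs ∧ ∀ ε₀ ε₁ : ℝ, 0 < ε₁ → ε₁ ≤ ε₀ → ε₀ ≤ εs →
      ∀ (E₁ E₂ U : Set (Euc n)) (x : Euc n) (r : ℝ), 0 < r → x ∈ E₁ →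
        IsUnionOfPlanes n d U →
        ndist n x (C₀ * r) E₁ U < ε₀ →
        ndist n x (C₂ * r) E₁ E₂ < ε₁ →
        ∀ (x' : Euc n) (r' : ℝ), x' ∈ E₂ → 0 < r' →
          ball x' (C₂ * r') ⊆ ball x r → r / C₁ ≤ r' →
          ndist n x' (C₀ * r') E₂ U < 2 * C₁ * C₂ * ε₀ := by
  have hC₀pos : 0 < C₀ := by linarith
  have hC₂pos : 0 < C₂ := by linarith
  refine ⟨(C₂ - C₀) / (C₁ * C₂), by apply div_pos <;> nlinarith, ?_⟩
  intro ε₀ ε₁ hε₁ hε₁₀ hε₀ E₁ E₂ U x r hr hx _ hE₁U hE₁E₂ x' r' _ hr' hB' hrr'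
  have hε₀pos : 0 < ε₀ := hε₁.trans_le hε₁₀
  rw [le_div_iff₀ (by positivity)] at hε₀
  rw [div_le_iff₀ (by positivity), mul_comm] at hrr'
  have hε₁C₂r : ε₁ * (C₂ * r) ≤ (C₂ - C₀) * r' := calc
    ε₁ * (C₂ * r) ≤ ε₀ * (C₂ * (C₁ * r')) := by gcongr
    _ = ε₀ * (C₁ * C₂) * r' := by ring
    _ ≤ (C₂ - C₀) * r' := by gcongr
  have hε₀_le_one : ε₀ ≤ 1 :=
    (mul_le_iff_le_one_left (by positivity)).mp (hε₀.trans (by nlinarith))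
  have hε₀C₀r : ε₀ * (C₀ * r) + r ≤ C₂ * r := by
    nlinarith [mul_le_mul_of_nonneg_right hε₀_le_one (by positivity : 0 ≤ C₀ * r)]
  have hB'B : ball x' (C₀ * r') ⊆ ball x r := (ball_subset_ball (by nlinarith)).trans hB'
  have hndist := mul_ndist_le_add_of_ndist_lt ⟨x, hx⟩ (by positivity) (by positivity)
    (by positivity) hε₀pos hε₁ hE₁U hE₁E₂
    ((Metric.thickening_ball _ _ _).trans <| (ball_subset_ball (by linarith)).trans <|
      hB'.trans (ball_subset_ball (by nlinarith)))
    ((thickening_subset_of_subset _ hB'B).trans <| (Metric.thickening_ball _ _ _).trans <|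
      ball_subset_ball hε₀C₀r)
  refine lt_of_mul_lt_mul_left (hndist.trans_lt ?_) (by positivity : 0 ≤ C₀ * r')
  calc ε₁ * (C₂ * r) + ε₀ * (C₀ * r) ≤ ε₀ * (C₂ + C₀) * r := by
        linarith [mul_le_mul_of_nonneg_right hε₁₀ (by positivity : 0 ≤ C₂ * r)]
    _ ≤ ε₀ * (C₂ + C₀) * (C₁ * r') := by gcongr
    _ < ε₀ * (2 * C₂ * C₀) * (C₁ * r') := by gcongr; nlinarith
    _ = C₀ * r' * (2 * C₁ * C₂ * ε₀) := by ring

theorem stmt8 (n d : ℕ) (hd1 : 1 ≤ d) (hdn : d < n) (C₀ C₁ C₂ : ℝ)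
    (hC₀ : 1 ≤ C₀) (hC₁ : 1 ≤ C₁) (hC₂ : 2 * C₀ < C₂) :
    ∃ εs : ℝ, 0 < εs ∧ ∀ ε₀ ε₁ : ℝ, 0 < ε₁ → ε₁ ≤ ε₀ → ε₀ ≤ εs →
      ∀ (E₁ E₂ U : Set (Euc n)) (x : Euc n) (r : ℝ), 0 < r → x ∈ E₁ →
        IsUnionOfPlanes n d U →
        ndist n x (C₀ * r) E₁ U < ε₀ →
        ndist n x (C₂ * r) E₁ E₂ < ε₁ →
        ∀ (x' : Euc n) (r' : ℝ), x' ∈ E₂ → 0 < r' →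
          ball x' (C₂ * r') ⊆ ball x r → r / C₁ ≤ r' →
          ndist n x' (C₀ * r') E₂ U < 2 * C₁ * C₂ * ε₀ :=
  stmt8_general n d C₀ C₁ C₂ hC₀ hC₁ hC₂

end QCMGP
end
end

section
/- Let 0 < d ≤ n, c > 0, m ∈ ℤ, and let E ⊆ ℝⁿ be a set satisfying ℋ^d_∞(E ∩ B(x,r)) ≥ c r^d for all x ∈ E and all 0 < r ≤ 2^{−m}. Then Σ_J ℓ(J)^d ≤ C(n,d,c)·ℋ^d(E), where the sum is taken over all dyadic cubes J of ℝⁿ of sidelength ℓ(J) = 2^{−m} with J ∩ E ≠ ∅. -/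
open MeasureTheory Metric Set
open scoped ENNReal NNReal

noncomputable section

namespace QCMGP

/-!
Pick a point `x_J ∈ J ∩ E` in every cube `J` of the sum and write `ℓ = 2^{-m}`. Lower content
regularity at scale `ℓ` together with `ℋ^d_∞ ≤ ℋ^d` gives `c ℓ^d ≤ ℋ^d(E ∩ B(x_J, ℓ))`.
Colour the cubes by their integer coordinates mod 3: two distinct cubes of the same colour are
at least `2ℓ` apart in some coordinate, so the balls `B(x_J, ℓ)` of one colour are disjoint and
their contributions add up to at most `ℋ^d(E)`. Summing over the `3ⁿ` colours gives
`C = 3ⁿ / c`.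
-/

theorem hcontent_le_hausdorffMeasure {n : ℕ} {d : ℝ} (hd : 0 < d) (A : Set (Euc n)) :
    hcontent n d A ≤ μH[d] A := by
  rw [Measure.hausdorffMeasure_apply]
  refine le_iSup₂_of_le 1 one_pos <| le_iInf₂ fun U hU => le_iInf fun _ => ?_
  refine (iInf₂_le U hU).trans_eq (tsum_congr fun i => ?_)
  rcases (U i).eq_empty_or_nonempty with h | h
  · rw [h, iSup_neg Set.not_nonempty_empty, bot_eq_zero]
    exact ENNReal.rpow_eq_zero_iff.mpr (Or.inl ⟨Metric.ediam_empty, hd⟩)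
  · rw [iSup_pos h]; rfl

theorem le_abs_sub_of_intCast_eq {N : ℕ} {k l : ℤ} (hkl : k ≠ l) (h : (k : ZMod N) = l) :
    (N : ℤ) ≤ |k - l| :=
  Int.le_of_dvd (abs_pos.mpr (sub_ne_zero.mpr hkl))
    ((dvd_abs _ _).mpr ((ZMod.intCast_eq_intCast_iff_dvd_sub l k N).mp h.symm))

theorem two_mul_le_abs_sub_of_three_le {t x y : ℝ} {k l : ℤ} (ht : 0 ≤ t)
    (hx : k * t ≤ x ∧ x < (k + 1) * t) (hy : l * t ≤ y ∧ y < (l + 1) * t)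
    (hkl : 3 ≤ |k - l|) : 2 * t ≤ |x - y| := by
  have hkl' : (3 : ℝ) ≤ |(k : ℝ) - l| := by exact_mod_cast hkl
  rcases le_abs.mp hkl' with h | h
  · nlinarith [le_abs_self (x - y), mul_le_mul_of_nonneg_right h ht]
  · nlinarith [neg_abs_le (x - y), mul_le_mul_of_nonneg_right h ht]

theorem disjoint_ball_of_mem_dyC {n : ℕ} {m : ℤ} {k l : Fin n → ℤ} {x y : Euc n}
    (hx : x ∈ dyC n m k) (hy : y ∈ dyC n m l) (hkl : k ≠ l)
    (hmod : ∀ i, (k i : ZMod 3) = l i) :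
    Disjoint (ball x ((2 : ℝ) ^ (-m))) (ball y ((2 : ℝ) ^ (-m))) := by
  obtain ⟨i, hi⟩ := Function.ne_iff.mp hkl
  have hgap := two_mul_le_abs_sub_of_three_le (by positivity) (hx i) (hy i)
    (by exact_mod_cast le_abs_sub_of_intCast_eq hi (hmod i))
  refine ball_disjoint_ball ?_
  linarith [PiLp.dist_apply_le x y i, Real.dist_eq (x i) (y i)]

theorem tsum_measure_inter_le_card_mul {α ι κ : Type*} [MeasurableSpace α] [Countable ι]
    [Fintype κ] (μ : Measure α) (E : Set α) {s : ι → Set α} (hs : ∀ i, MeasurableSet (s i))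
    (φ : ι → κ) (hdisj : ∀ i j, i ≠ j → φ i = φ j → Disjoint (s i) (s j)) :
    ∑' i, μ (E ∩ s i) ≤ Fintype.card κ * μ E := by
  have hfiber : ∀ r, ∑' i : φ ⁻¹' {r}, μ (E ∩ s i) ≤ μ E := fun r => calc
    ∑' i : φ ⁻¹' {r}, μ (E ∩ s i) = μ.restrict E (⋃ i : φ ⁻¹' {r}, s i) := by
      rw [measure_iUnion (μ := μ.restrict E)
        (fun i j hij => hdisj i.1 j.1 (Subtype.coe_injective.ne hij) (i.2.trans j.2.symm))
        fun i => hs i.1]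
      simp only [Measure.restrict_apply (hs _), inter_comm]
    _ ≤ μ E := (measure_mono (subset_univ _)).trans_eq (Measure.restrict_apply_univ E)
  calc ∑' i, μ (E ∩ s i) = ∑' r, ∑' i : φ ⁻¹' {r}, μ (E ∩ s i) :=
        (ENNReal.tsum_fiberwise _ φ).symm
    _ ≤ ∑' _ : κ, μ E := ENNReal.tsum_le_tsum hfiber
    _ = Fintype.card κ * μ E := by
        rw [tsum_fintype, Finset.sum_const, Finset.card_univ, nsmul_eq_mul]

theorem stmt12_general (n : ℕ) (d c : ℝ) (hd : 0 < d) (hc : 0 < c) :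
    ∃ C : ℝ, 0 < C ∧
      ∀ (m : ℤ) (E : Set (Euc n)),
        (∀ x ∈ E, ∀ r : ℝ, 0 < r → r ≤ (2 : ℝ) ^ (-m) →
          ENNReal.ofReal c * ENNReal.ofReal r ^ d ≤ hcontent n d (E ∩ ball x r)) →
        (∑' k : {k : Fin n → ℤ // (dyC n m k ∩ E).Nonempty},
            ENNReal.ofReal ((2 : ℝ) ^ (-m)) ^ d)
          ≤ ENNReal.ofReal C * μH[d] E := by
  refine ⟨3 ^ n / c, by positivity, fun m E hE => ?_⟩
  set ℓ : ℝ := (2 : ℝ) ^ (-m)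
  choose x hxJ hxE using fun k : {k : Fin n → ℤ // (dyC n m k ∩ E).Nonempty} => k.2
  have hlower : ∀ k, ENNReal.ofReal c * ENNReal.ofReal ℓ ^ d ≤ μH[d] (E ∩ ball (x k) ℓ) :=
    fun k => (hE _ (hxE k) ℓ (by positivity) le_rfl).trans (hcontent_le_hausdorffMeasure hd _)
  have hcolour : ∑' k, μH[d] (E ∩ ball (x k) ℓ) ≤ 3 ^ n * μH[d] E := by
    refine (tsum_measure_inter_le_card_mul μH[d] E (fun _ => measurableSet_ball)
      (fun k i => (k.1 i : ZMod 3)) fun k l hkl hmod =>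
        disjoint_ball_of_mem_dyC (hxJ k) (hxJ l) (Subtype.coe_injective.ne hkl)
          (congrFun hmod)).trans_eq ?_
    simp
  have hc' : ENNReal.ofReal c ≠ 0 := (ENNReal.ofReal_pos.mpr hc).ne'
  calc ∑' _k, ENNReal.ofReal ℓ ^ d
      = (ENNReal.ofReal c)⁻¹ * ∑' _k, ENNReal.ofReal c * ENNReal.ofReal ℓ ^ d := by
        rw [ENNReal.tsum_mul_left, ← mul_assoc, ENNReal.inv_mul_cancel hc' ENNReal.ofReal_ne_top,
          one_mul]
    _ ≤ (ENNReal.ofReal c)⁻¹ * (3 ^ n * μH[d] E) := by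
        gcongr
        exact (ENNReal.tsum_le_tsum hlower).trans hcolour
    _ = ENNReal.ofReal (3 ^ n / c) * μH[d] E := by
        rw [ENNReal.ofReal_div_of_pos hc, ENNReal.ofReal_pow (by norm_num), ENNReal.ofReal_ofNat,
          ENNReal.div_eq_inv_mul, mul_assoc]

theorem stmt12 (n : ℕ) (d c : ℝ) (hd : 0 < d) (hdn : d ≤ n) (hc : 0 < c) :
    ∃ C : ℝ, 0 < C ∧
      ∀ (m : ℤ) (E : Set (Euc n)),
        (∀ x ∈ E, ∀ r : ℝ, 0 < r → r ≤ (2 : ℝ) ^ (-m) →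
          ENNReal.ofReal c * ENNReal.ofReal r ^ d ≤ hcontent n d (E ∩ ball x r)) →
        (∑' k : {k : Fin n → ℤ // (dyC n m k ∩ E).Nonempty},
            ENNReal.ofReal ((2 : ℝ) ^ (-m)) ^ d)
          ≤ ENNReal.ofReal C * μH[d] E :=
  stmt12_general n d c hd hc

end QCMGP
end
end
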